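/- Let F be a field of characteristic p > 0 and let δ = h(χ)∂ be the derivation f ↦ f′·h(z) on B[z], where χ is multiplication by z and ∂ the usual derivative, B a unital F-algebra, h ∈ Z(B)[x] with non-zero-divisor leading coefficient. Then the set {χ^i h(χ)^j ∂^j : i ≥ 0, 0 ≤ j < p} is a basis of the algebra D_h(B[z]) (generated by multiplications by elements of B, χ, and δ) as a left B-module. -/

import Mathlib

noncomputable section

/-- b is not a (two-sided) zero divisor of B. -/
def NotZD {B : Type*} [Ring B] (b : B) : Prop :=
  ∀ c : B, (c * b = 0 → c = 0) ∧ (b * c = 0 → c = 0)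

variable (F : Type*) [Field F] (B : Type*) [Ring B] [Algebra F B]

/-- The formal derivative ∂ on B[z], as an F-linear endomorphism. -/
def dOp : Module.End F (Polynomial B) :=
  (Polynomial.derivative (R := B)).restrictScalars F

/-- Multiplication by z on B[z]. -/
def chi : Module.End F (Polynomial B) := LinearMap.mulLeft F (Polynomial.X : Polynomial B)

/-- The operator h(χ), multiplication by h(z), i.e. h evaluated at χ with
coefficients acting as left multiplications. -/
def hChi (h : Polynomial B) : Module.End F (Polynomial B) :=
  h.sum fun n b => LinearMap.mulLeft F (Polynomial.C b) * (chi F B) ^ n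

/-- The derivation δ(f) = f′·h(z). -/
def deltaOp (h : Polynomial B) : Module.End F (Polynomial B) :=
  LinearMap.mulRight F (h : Polynomial B) * dOp F B

/-- The algebra D_h(B[z]) of differential operators generated by left
multiplications by elements of B, multiplication by z, and δ. -/
def Dh (h : Polynomial B) : Subalgebra F (Module.End F (Polynomial B)) :=
  Algebra.adjoin F
    ((Set.range fun b : B => LinearMap.mulLeft F (Polynomial.C b)) ∪
      {chi F B, deltaOp F B h})

/-!
Since `h` is central, `δ = h·∂`, and Leibniz' rule `∂·g = g·∂ + g′` gives
`δ·(g h^j ∂^j) = (g h^(j+1)) ∂^(j+1) + (h g′ + j g h′) h^j ∂^j`.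
Hence the span of the operators `g h^j ∂^j` (`g ∈ B[z]`) contains `1` and is stable under
left multiplication by the generators of `D_h`, so it contains `D_h`; read backwards, the
same identity puts every `h^j ∂^j` into `D_h`. As `∂^p = 0` only `j < p` contributes, and
expanding `g` in the monomials gives the spanning statement. For independence, apply a
vanishing combination to `z^j` with `j` the least order occurring: only the terms of order
`j` survive, leaving `j! (∑ᵢ c(i,j) zⁱ) h^j = 0`; `j!` is invertible in `F` because `j < p`,
and `h^j` is right regular because the leading coefficient of `h` is.
-/

open Polynomial
open Algebra (lmul)

namespace Polynomial

variable {R : Type*}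

theorem mem_center_of_forall_coeff_mem_center [Semiring R] {h : R[X]}
    (hcen : ∀ n, h.coeff n ∈ Set.center R) : h ∈ Set.center R[X] := by
  refine Semigroup.mem_center_iff.2 fun g => Polynomial.ext fun n => ?_
  rw [coeff_mul, coeff_mul, ← Finset.Nat.sum_antidiagonal_swap]
  exact Finset.sum_congr rfl fun x _ => Semigroup.mem_center_iff.1 (hcen x.1) _

theorem mul_derivative_pow [Semiring R] {h : R[X]} (hh : Commute h (derivative h)) (n : ℕ) :
    h * derivative (h ^ n) = n • (derivative h * h ^ n) := by
  induction n with
  | zero => simp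
  | succ n ih =>
    have hswap : h * (derivative h * h ^ n) = derivative h * h ^ (n + 1) := by
      rw [← mul_assoc, hh.eq, mul_assoc, ← pow_succ']
    rw [pow_succ', derivative_mul, mul_add, ih, mul_smul_comm, hswap, ← pow_succ', succ_nsmul']

theorem mul_derivative_mul_pow [Semiring R] {h : R[X]} (hc : h ∈ Set.center R[X])
    (g : R[X]) (j : ℕ) :
    h * derivative (g * h ^ j) = (h * derivative g + j • (g * derivative h)) * h ^ j := by
  have hcomm : ∀ g, g * h = h * g := Semigroup.mem_center_iff.1 hc
  rw [derivative_mul, mul_add, ← mul_assoc h g, ← hcomm g, mul_assoc g,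
    mul_derivative_pow (hcomm _).symm, add_mul, mul_assoc, mul_smul_comm, smul_mul_assoc,
    mul_assoc]

theorem iterate_derivative_X_pow_eq_nsmul [Semiring R] (m k : ℕ) :
    derivative^[k] (X ^ m : R[X]) = m.descFactorial k • X ^ (m - k) := by
  have hmap := iterate_derivative_map (X ^ m : ℕ[X]) (Nat.castRingHom R) k
  rw [Polynomial.map_pow, map_X, iterate_derivative_X_pow_eq_natCast_mul] at hmap
  rw [hmap, Polynomial.map_mul, Polynomial.map_natCast, Polynomial.map_pow, map_X, nsmul_eq_mul]

theorem isRightRegular_of_isRightRegular_leadingCoeff [Ring R] {h : R[X]}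
    (hh : IsRightRegular h.leadingCoeff) : IsRightRegular h := by
  refine isRightRegular_iff_left_eq_zero_of_mul.2 fun g hg => ?_
  by_contra hg0
  have hlc : g.leadingCoeff * h.leadingCoeff ≠ 0 := fun h0 =>
    leadingCoeff_ne_zero.2 hg0 (isRightRegular_iff_left_eq_zero_of_mul.1 hh _ h0)
  exact hlc (by rw [← leadingCoeff_mul' hlc, hg, leadingCoeff_zero])

theorem coeff_sum_filter_snd_eq [Semiring R] (c : ℕ × ℕ →₀ R) (i j : ℕ) :
    coeff (∑ q ∈ c.support with q.2 = j, C (c q) * X ^ q.1) i = c (i, j) := by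
  rw [finsetSum_coeff]
  simp only [coeff_C_mul_X_pow]
  rw [Finset.sum_eq_single (i, j)]
  · simp
  · rintro q hq hne
    rw [if_neg fun hi => hne (Prod.ext hi.symm (Finset.mem_filter.1 hq).2)]
  · intro hij
    simpa using hij

end Polynomial

theorem CharP.cast_factorial_ne_zero (K : Type*) [Field K] {p n : ℕ} [CharP K p] (hn : n < p) :
    (n.factorial : K) ≠ 0 := by
  have : NeZero p := ⟨(n.zero_le.trans_lt hn).ne'⟩
  have := CharP.char_is_prime_of_pos K p
  rw [Ne, CharP.cast_eq_zero_iff K p, Nat.Prime.dvd_factorial Fact.out]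
  exact hn.not_ge

section Operators

variable {F B}

theorem mulLeft_eq_lmul (g : B[X]) : LinearMap.mulLeft F g = lmul F B[X] g := rfl

theorem chi_eq_lmul : chi F B = lmul F B[X] X := rfl

theorem hChi_eq_lmul (g : B[X]) : hChi F B g = lmul F B[X] g := by
  conv_rhs => rw [← g.sum_C_mul_X_pow_eq]
  simp only [hChi, Polynomial.sum_def, map_sum, map_mul, map_pow, chi_eq_lmul, mulLeft_eq_lmul]

theorem dOp_pow_apply (k : ℕ) (f : B[X]) : (dOp F B ^ k) f = derivative^[k] f := by
  rw [Module.End.pow_apply]; rfl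

theorem dOp_mul_lmul (g : B[X]) :
    dOp F B * lmul F B[X] g = lmul F B[X] g * dOp F B + lmul F B[X] (derivative g) := by
  ext f : 1
  simp [dOp, derivative_mul, add_comm]

theorem dOp_pow_eq_zero (p : ℕ) [CharP F p] (hp : 0 < p) : dOp F B ^ p = 0 := by
  have hpB : (p : B[X]) = 0 := by
    rw [← map_natCast (algebraMap F B[X]), CharP.cast_eq_zero, map_zero]
  obtain ⟨k, hk⟩ := Nat.dvd_factorial hp le_rfl
  ext f : 1
  rw [dOp_pow_apply, iterate_derivative_eq_factorial_smul_sum, hk, nsmul_eq_mul, Nat.cast_mul,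
    hpB, zero_mul, zero_mul, LinearMap.zero_apply]

variable {h : B[X]}

theorem deltaOp_eq_lmul_mul (hc : h ∈ Set.center B[X]) :
    deltaOp F B h = lmul F B[X] h * dOp F B := by
  ext f : 1
  exact Semigroup.mem_center_iff.1 hc _

theorem deltaOp_mul_lmul_mul_dOp_pow (hc : h ∈ Set.center B[X]) (w : B[X]) (j : ℕ) :
    deltaOp F B h * (lmul F B[X] w * dOp F B ^ j) =
      lmul F B[X] (h * w) * dOp F B ^ (j + 1) +
        lmul F B[X] (h * derivative w) * dOp F B ^ j := by
  rw [deltaOp_eq_lmul_mul hc, mul_assoc, ← mul_assoc (dOp F B), dOp_mul_lmul]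
  simp only [map_mul, add_mul, mul_add, mul_assoc, pow_succ']

end Operators

section Generation

variable {F B} {h : B[X]}

theorem lmul_mem_Dh (g : B[X]) : lmul F B[X] g ∈ Dh F B h := by
  rw [← hChi_eq_lmul]
  exact Subalgebra.sum_mem _ fun n _ =>
    mul_mem (Algebra.subset_adjoin (Set.mem_union_left _ ⟨_, rfl⟩))
      (pow_mem (Algebra.subset_adjoin (Set.mem_union_right _ (Set.mem_insert _ _))) n)

theorem deltaOp_mem_Dh : deltaOp F B h ∈ Dh F B h :=
  Algebra.subset_adjoin (Set.mem_union_right _ (Set.mem_insert_of_mem _ rfl))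

theorem lmul_pow_mul_dOp_pow_mem_Dh (hc : h ∈ Set.center B[X]) (j : ℕ) :
    lmul F B[X] (h ^ j) * dOp F B ^ j ∈ Dh F B h := by
  induction j with
  | zero => rw [pow_zero, pow_zero, map_one, one_mul]; exact one_mem _
  | succ j ih =>
    have hstep := deltaOp_mul_lmul_mul_dOp_pow (F := F) hc (h ^ j) j
    rw [← pow_succ', mul_derivative_pow (Semigroup.mem_center_iff.1 hc _).symm,
      ← smul_mul_assoc, map_mul, mul_assoc] at hstep
    rw [eq_sub_of_add_eq hstep.symm]
    exact sub_mem (mul_mem deltaOp_mem_Dh ih) (mul_mem (lmul_mem_Dh _) ih)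

end Generation

def normalOrdered (h : B[X]) : Submodule F (Module.End F B[X]) :=
  Submodule.span F {T | ∃ (g : B[X]) (j : ℕ), lmul F B[X] (g * h ^ j) * dOp F B ^ j = T}

section NormalOrdered

variable {F B} {h : B[X]}

theorem lmul_mul_dOp_pow_mem_normalOrdered (g : B[X]) (j : ℕ) :
    lmul F B[X] (g * h ^ j) * dOp F B ^ j ∈ normalOrdered F B h :=
  Submodule.subset_span ⟨g, j, rfl⟩

theorem lmul_mul_mem_normalOrdered (f : B[X]) {T : Module.End F B[X]}
    (hT : T ∈ normalOrdered F B h) : lmul F B[X] f * T ∈ normalOrdered F B h := by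
  induction hT using Submodule.span_induction with
  | mem T hT =>
    obtain ⟨g, j, rfl⟩ := hT
    rw [← mul_assoc, ← map_mul, ← mul_assoc]
    exact lmul_mul_dOp_pow_mem_normalOrdered _ _
  | zero => rw [mul_zero]; exact zero_mem _
  | add T T' _ _ hT hT' => rw [mul_add]; exact add_mem hT hT'
  | smul r T _ hT => rw [mul_smul_comm]; exact Submodule.smul_mem _ r hT

theorem deltaOp_mul_mem_normalOrdered (hc : h ∈ Set.center B[X]) {T : Module.End F B[X]}
    (hT : T ∈ normalOrdered F B h) : deltaOp F B h * T ∈ normalOrdered F B h := by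
  induction hT using Submodule.span_induction with
  | mem T hT =>
    obtain ⟨g, j, rfl⟩ := hT
    rw [deltaOp_mul_lmul_mul_dOp_pow hc, mul_derivative_mul_pow hc, ← mul_assoc h,
      (Semigroup.mem_center_iff.1 hc g).symm, mul_assoc, ← pow_succ']
    exact add_mem (lmul_mul_dOp_pow_mem_normalOrdered _ _)
      (lmul_mul_dOp_pow_mem_normalOrdered _ _)
  | zero => rw [mul_zero]; exact zero_mem _
  | add T T' _ _ hT hT' => rw [mul_add]; exact add_mem hT hT'
  | smul r T _ hT => rw [mul_smul_comm]; exact Submodule.smul_mem _ r hT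

theorem Dh_le_normalOrdered (hc : h ∈ Set.center B[X]) :
    Subalgebra.toSubmodule (Dh F B h) ≤ normalOrdered F B h := by
  rw [Dh, Algebra.adjoin_eq_span, Submodule.span_le]
  intro T hT
  induction hT using Submonoid.closure_induction_left with
  | one =>
    have h1 := lmul_mul_dOp_pow_mem_normalOrdered (F := F) (h := h) 1 0
    rwa [pow_zero, pow_zero, mul_one, mul_one, map_one] at h1
  | mul_left S hS T _ hT =>
    rcases hS with ⟨b, rfl⟩ | rfl | rfl
    · exact lmul_mul_mem_normalOrdered _ hT
    · exact lmul_mul_mem_normalOrdered _ hT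
    · exact deltaOp_mul_mem_normalOrdered hc hT

end NormalOrdered

def basisOp (h : B[X]) (i j : ℕ) : Module.End F B[X] :=
  chi F B ^ i * hChi F B h ^ j * dOp F B ^ j

def basisSum (h : B[X]) (c : ℕ × ℕ →₀ B) : Module.End F B[X] :=
  c.sum fun q b => LinearMap.mulLeft F (C b) * basisOp F B h q.1 q.2

section BasisSum

variable {F B} {h : B[X]}

theorem basisOp_eq_lmul (i j : ℕ) :
    basisOp F B h i j = lmul F B[X] (X ^ i * h ^ j) * dOp F B ^ j := by
  rw [basisOp, chi_eq_lmul, hChi_eq_lmul, ← map_pow, ← map_pow, ← map_mul]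

theorem basisSum_single (q : ℕ × ℕ) (b : B) :
    basisSum F B h (Finsupp.single q b) = LinearMap.mulLeft F (C b) * basisOp F B h q.1 q.2 :=
  Finsupp.sum_single_index (by simp)

theorem basisSum_add (c₁ c₂ : ℕ × ℕ →₀ B) :
    basisSum F B h (c₁ + c₂) = basisSum F B h c₁ + basisSum F B h c₂ :=
  Finsupp.sum_add_index' (fun _ => by simp) fun _ _ _ => by simp [mulLeft_eq_lmul, add_mul]

theorem basisSum_smul (r : F) (c : ℕ × ℕ →₀ B) :
    basisSum F B h (r • c) = r • basisSum F B h c := by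
  rw [basisSum, Finsupp.sum_smul_index' (fun _ => by simp), basisSum, Finsupp.smul_sum]
  simp only [← smul_C, mulLeft_eq_lmul, map_smul, smul_mul_assoc]

theorem basisOp_apply_X_pow (i k m : ℕ) :
    basisOp F B h i k (X ^ m) = m.descFactorial k • (X ^ i * h ^ k * X ^ (m - k)) := by
  rw [basisOp_eq_lmul, Module.End.mul_apply, dOp_pow_apply, iterate_derivative_X_pow_eq_nsmul,
    map_nsmul]
  rfl

theorem basisSum_apply_X_pow_of_le {c : ℕ × ℕ →₀ B} {j : ℕ}
    (hj : ∀ q ∈ c.support, j ≤ q.2) :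
    basisSum F B h c (X ^ j) =
      j.factorial • ((∑ q ∈ c.support with q.2 = j, C (c q) * X ^ q.1) * h ^ j) := by
  rw [basisSum, Finsupp.sum, LinearMap.sum_apply, Finset.sum_mul, Finset.smul_sum,
    Finset.sum_filter]
  refine Finset.sum_congr rfl fun q hq => ?_
  rw [Module.End.mul_apply, basisOp_apply_X_pow, map_nsmul]
  split_ifs with hqj
  · rw [hqj, Nat.descFactorial_self, Nat.sub_self, pow_zero, mul_one]
    simp [mul_assoc]
  · rw [Nat.descFactorial_eq_zero_iff_lt.2 ((hj q hq).lt_of_ne' hqj), zero_smul]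

end BasisSum

def basisSpan (p : ℕ) (h : B[X]) : Submodule F (Module.End F B[X]) where
  carrier := {T | ∃ c : ℕ × ℕ →₀ B, (∀ q ∈ c.support, q.2 < p) ∧ basisSum F B h c = T}
  zero_mem' := ⟨0, by simp, Finsupp.sum_zero_index⟩
  add_mem' := by
    rintro _ _ ⟨c₁, hc₁, rfl⟩ ⟨c₂, hc₂, rfl⟩
    refine ⟨c₁ + c₂, fun q hq => ?_, basisSum_add c₁ c₂⟩
    rcases Finset.mem_union.1 (Finsupp.support_add hq) with hq | hq
    exacts [hc₁ q hq, hc₂ q hq]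
  smul_mem' := by
    rintro r _ ⟨c, hc, rfl⟩
    exact ⟨r • c, fun q hq => hc q (Finsupp.support_smul hq), basisSum_smul r c⟩

section Basis

variable {F B} {h : B[X]} {p : ℕ} [CharP F p]

theorem lmul_mul_dOp_pow_mem_basisSpan (hp : 0 < p) (g : B[X]) (j : ℕ) :
    lmul F B[X] (g * h ^ j) * dOp F B ^ j ∈ basisSpan F B p h := by
  by_cases hj : j < p
  · induction g using Polynomial.induction_on' with
    | add g₁ g₂ h₁ h₂ => rw [add_mul, map_add, add_mul]; exact add_mem h₁ h₂
    | monomial n b =>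
      refine ⟨Finsupp.single (n, j) b, fun q hq => ?_, ?_⟩
      · rw [Finset.mem_singleton.1 (Finsupp.support_single_subset hq)]
        exact hj
      · rw [basisSum_single, basisOp_eq_lmul, ← C_mul_X_pow_eq_monomial, mulLeft_eq_lmul,
          ← mul_assoc, ← map_mul, ← mul_assoc]
  · have hd : dOp F B ^ j = 0 := by
      rw [← Nat.sub_add_cancel (not_lt.1 hj), pow_add, dOp_pow_eq_zero p hp, mul_zero]
    rw [hd, mul_zero]
    exact zero_mem _

theorem normalOrdered_le_basisSpan (hp : 0 < p) : normalOrdered F B h ≤ basisSpan F B p h :=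
  Submodule.span_le.2 fun _ ⟨g, j, hT⟩ => hT ▸ lmul_mul_dOp_pow_mem_basisSpan hp g j

theorem eq_zero_of_basisSum_eq_zero (hreg : IsRightRegular h) {c : ℕ × ℕ →₀ B}
    (hc : ∀ q ∈ c.support, q.2 < p) (h0 : basisSum F B h c = 0) : c = 0 := by
  classical
  by_contra hne
  obtain ⟨q₀, hq₀, hmin⟩ :=
    c.support.exists_min_image Prod.snd (Finsupp.support_nonempty_iff.2 hne)
  have hX : basisSum F B h c (X ^ q₀.2) = 0 := by rw [h0, LinearMap.zero_apply]
  rw [basisSum_apply_X_pow_of_le hmin, ← Nat.cast_smul_eq_nsmul F, smul_eq_zero] at hX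
  have hcol := hreg.pow q₀.2 <|
    (hX.resolve_left (CharP.cast_factorial_ne_zero F (hc q₀ hq₀))).trans (zero_mul _).symm
  apply Finsupp.mem_support_iff.1 hq₀
  rw [← coeff_sum_filter_snd_eq c q₀.1 q₀.2, hcol, coeff_zero]

end Basis

/-- In characteristic p > 0, with h ∈ Z(B)[x] having a non-zero-divisor leading
coefficient, {χ^i h(χ)^j ∂^j : i ≥ 0, 0 ≤ j < p} is a basis of D_h(B[z]) as a
left B-module: the operators belong to D_h(B[z]), they span it over B, and they
are left B-linearly independent. -/
theorem stmt10 (p : ℕ) (hp : 0 < p) [CharP F p]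
    (h : Polynomial B) (hcen : ∀ n, h.coeff n ∈ Set.center B)
    (hlead : NotZD h.leadingCoeff) :
    (∀ i j : ℕ, j < p →
        (chi F B) ^ i * (hChi F B h) ^ j * (dOp F B) ^ j ∈ Dh F B h) ∧
    (∀ T ∈ Dh F B h, ∃ c : ℕ × ℕ →₀ B, (∀ q ∈ c.support, q.2 < p) ∧
        T = c.sum fun q b =>
          LinearMap.mulLeft F (Polynomial.C b) *
            ((chi F B) ^ q.1 * (hChi F B h) ^ q.2 * (dOp F B) ^ q.2)) ∧
    (∀ c : ℕ × ℕ →₀ B, (∀ q ∈ c.support, q.2 < p) →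
        (c.sum fun q b =>
          LinearMap.mulLeft F (Polynomial.C b) *
            ((chi F B) ^ q.1 * (hChi F B h) ^ q.2 * (dOp F B) ^ q.2)) = 0 → c = 0) := by
  have hc : h ∈ Set.center B[X] := mem_center_of_forall_coeff_mem_center hcen
  have hreg : IsRightRegular h := isRightRegular_of_isRightRegular_leadingCoeff <|
    isRightRegular_iff_left_eq_zero_of_mul.2 fun b hb => (hlead b).1 hb
  refine ⟨fun i j _ => ?_, fun T hT => ?_, fun c hsupp h0 => ?_⟩
  · change basisOp F B h i j ∈ Dh F B h
    rw [basisOp_eq_lmul, map_mul, mul_assoc]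
    exact mul_mem (lmul_mem_Dh _) (lmul_pow_mul_dOp_pow_mem_Dh hc j)
  · obtain ⟨c, hsupp, hT⟩ := normalOrdered_le_basisSpan hp (Dh_le_normalOrdered hc hT)
    exact ⟨c, hsupp, hT.symm⟩
  · exact eq_zero_of_basisSum_eq_zero hreg hsupp h0
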